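/- arXiv:2003.11790 — 3 statements merged into one kernel-verified Lean document; each statement's English description precedes it below -/
import Mathlib

section
/- The numerical flux Ψ(k,p_ℓ,p_r), defined as the max of φ(k)p + (κ/(2λ))(λp-μ)² over p ∈ [p_ℓ,p_r] if p_ℓ ≤ p_r and the min over p ∈ [p_r,p_ℓ] if p_ℓ ≥ p_r, equals -φ(k)²/(2κλ) + (μ/λ)φ(k) + (κλ/2)·max((p_r - μ/λ + φ(k)/(κλ))₊², (p_ℓ - μ/λ + φ(k)/(κλ))₋²), where κ>0 and λ>0. -/
lemma quad_max (A K c pl pr : ℝ) (hA : 0 < A) (h : pl ≤ pr) :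
    IsGreatest ((fun p : ℝ => A * (p - c) ^ 2 + K) '' Set.Icc pl pr)
      (K + A * max ((max (pr - c) 0) ^ 2) ((min (pl - c) 0) ^ 2)) := by
  have key : max ((max (pr - c) 0) ^ 2) ((min (pl - c) 0) ^ 2)
      = max ((pr - c) ^ 2) ((pl - c) ^ 2) := by
    rcases le_total 0 (pl - c) with ha | ha
    · have hb : (0:ℝ) ≤ pr - c := le_trans ha (by linarith)
      rw [min_eq_right ha, max_eq_left hb]
      rw [max_eq_left (by simpa using sq_nonneg (pr - c)), max_eq_left (by nlinarith)]
    · rcases le_total (pr - c) 0 with hb | hb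
      · rw [min_eq_left ha, max_eq_right hb]
        rw [max_eq_right (by simpa using sq_nonneg (pl - c)), max_eq_right (by nlinarith)]
      · rw [min_eq_left ha, max_eq_left hb]
  rw [key]
  constructor
  · rcases le_total ((pl - c) ^ 2) ((pr - c) ^ 2) with h2 | h2
    · exact ⟨pr, Set.right_mem_Icc.2 h, by rw [max_eq_left h2]; ring⟩
    · exact ⟨pl, Set.left_mem_Icc.2 h, by rw [max_eq_right h2]; ring⟩
  · rintro y ⟨p, hp, rfl⟩
    have hle : (p - c) ^ 2 ≤ max ((pr - c) ^ 2) ((pl - c) ^ 2) := by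
      rcases le_total (p - c) 0 with hp0 | hp0
      · exact le_max_of_le_right (by nlinarith [hp.1])
      · exact le_max_of_le_left (by nlinarith [hp.2])
    show A * (p - c) ^ 2 + K ≤ _
    nlinarith

lemma quad_min (A K c pl pr : ℝ) (hA : 0 < A) (h : pr ≤ pl) :
    IsLeast ((fun p : ℝ => A * (p - c) ^ 2 + K) '' Set.Icc pr pl)
      (K + A * max ((max (pr - c) 0) ^ 2) ((min (pl - c) 0) ^ 2)) := by
  rcases lt_or_ge 0 (pr - c) with hb | hb
  · have ha : (0:ℝ) ≤ pl - c := by linarith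
    rw [min_eq_right ha, max_eq_left hb.le,
      max_eq_left (by simpa using sq_nonneg (pr - c))]
    constructor
    · exact ⟨pr, Set.left_mem_Icc.2 h, by ring⟩
    · rintro y ⟨p, hp, rfl⟩
      show _ ≤ A * (p - c) ^ 2 + K
      have h1 : (pr - c) ^ 2 ≤ (p - c) ^ 2 := by nlinarith [hp.1]
      nlinarith [mul_le_mul_of_nonneg_left h1 hA.le]
  · rcases lt_or_ge (pl - c) 0 with ha | ha
    · rw [min_eq_left ha.le, max_eq_right hb,
        max_eq_right (by simpa using sq_nonneg (pl - c))]
      constructor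
      · exact ⟨pl, Set.right_mem_Icc.2 h, by ring⟩
      · rintro y ⟨p, hp, rfl⟩
        show _ ≤ A * (p - c) ^ 2 + K
        have h1 : (pl - c) ^ 2 ≤ (p - c) ^ 2 := by nlinarith [hp.2]
        nlinarith [mul_le_mul_of_nonneg_left h1 hA.le]
    · rw [min_eq_right ha, max_eq_right hb]
      simp only [ne_eq, OfNat.ofNat_ne_zero, not_false_eq_true, zero_pow, max_self, mul_zero,
        add_zero]
      constructor
      · exact ⟨c, ⟨by linarith, by linarith⟩, by ring⟩
      · rintro y ⟨p, hp, rfl⟩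
        show _ ≤ A * (p - c) ^ 2 + K
        nlinarith [sq_nonneg (p - c)]

/-- Explicit formula for the numerical flux `Ψ(k,p_ℓ,p_r)`:
max of `F(p) = φ(k) p + κ/(2λ) (λp-μ)²` over `[p_ℓ, p_r]` when `p_ℓ ≤ p_r`,
min over `[p_r, p_ℓ]` when `p_r ≤ p_ℓ`, equals
`-φ(k)²/(2κλ) + (μ/λ) φ(k) + (κλ/2) max((p_r - μ/λ + φ(k)/(κλ))₊², (p_ℓ - μ/λ + φ(k)/(κλ))₋²)`. -/
theorem stmt_7 (κ lam μ φk pl pr : ℝ) (hκ : 0 < κ) (hlam : 0 < lam) :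
    (pl ≤ pr →
      IsGreatest
        ((fun p : ℝ => φk * p + κ / (2 * lam) * (lam * p - μ) ^ 2) '' Set.Icc pl pr)
        (-φk ^ 2 / (2 * κ * lam) + μ / lam * φk
          + κ * lam / 2 *
            max ((max (pr - μ / lam + φk / (κ * lam)) 0) ^ 2)
                ((min (pl - μ / lam + φk / (κ * lam)) 0) ^ 2))) ∧
    (pr ≤ pl →
      IsLeast
        ((fun p : ℝ => φk * p + κ / (2 * lam) * (lam * p - μ) ^ 2) '' Set.Icc pr pl)
        (-φk ^ 2 / (2 * κ * lam) + μ / lam * φk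
          + κ * lam / 2 *
            max ((max (pr - μ / lam + φk / (κ * lam)) 0) ^ 2)
                ((min (pl - μ / lam + φk / (κ * lam)) 0) ^ 2))) := by
  set c : ℝ := μ / lam - φk / (κ * lam) with hc
  set K : ℝ := -φk ^ 2 / (2 * κ * lam) + μ / lam * φk with hK
  have hA : 0 < κ * lam / 2 := by positivity
  have hfun : (fun p : ℝ => φk * p + κ / (2 * lam) * (lam * p - μ) ^ 2)
      = fun p : ℝ => κ * lam / 2 * (p - c) ^ 2 + K := by
    funext p
    rw [hc, hK]
    field_simp
    ring
  have hr : pr - μ / lam + φk / (κ * lam) = pr - c := by rw [hc]; ring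
  have hl : pl - μ / lam + φk / (κ * lam) = pl - c := by rw [hc]; ring
  rw [hfun, hr, hl]
  constructor
  · intro hle
    exact quad_max (κ * lam / 2) K c pl pr hA hle
  · intro hle
    exact quad_min (κ * lam / 2) K c pl pr hA hle
end

section
/- Let αε > 0 satisfy (αε)² + αε - 1 > 0 and let λ ∈ [-1, 0]. Then x₊ = ((1+2αε-λ) + √((1+2αε-λ)² - 4(1-λ(1+αε))))/2 satisfies x₊ > 1 + αε. -/
/-- If `a = αε > 0` with `a² + a > 1` and `λ ∈ [-1,0]`, then with `S = 1+2a-λ`,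
`P = 1-λ(1+a)`, one has `S²-4P ≥ 0` and `x₊ = (S + √(S²-4P))/2 > 1+a`. -/
theorem stmt_13 (a lam : ℝ) (ha : 0 < a) (ha' : a ^ 2 + a > 1)
    (hl1 : -1 ≤ lam) (hl0 : lam ≤ 0) :
    (1 + 2 * a - lam) ^ 2 - 4 * (1 - lam * (1 + a)) ≥ 0 ∧
    ((1 + 2 * a - lam)
      + Real.sqrt ((1 + 2 * a - lam) ^ 2 - 4 * (1 - lam * (1 + a)))) / 2 > 1 + a := by
  have hD : (1 + 2 * a - lam) ^ 2 - 4 * (1 - lam * (1 + a))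
      = 4 * (a ^ 2 + a - 1) + (1 + lam) ^ 2 := by ring
  have h1 : (0:ℝ) ≤ 1 + lam := by linarith
  have hDpos : (1 + lam) ^ 2 < (1 + 2 * a - lam) ^ 2 - 4 * (1 - lam * (1 + a)) := by
    rw [hD]; nlinarith
  have hsq : 1 + lam < Real.sqrt ((1 + 2 * a - lam) ^ 2 - 4 * (1 - lam * (1 + a))) := by
    rw [show (1 + lam) = Real.sqrt ((1 + lam) ^ 2) from (Real.sqrt_sq h1).symm]
    exact Real.sqrt_lt_sqrt (by positivity) hDpos
  refine ⟨by rw [hD]; nlinarith, by linarith⟩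
end

section
/- The function χ(q) = r(μ/λ - φ/(κλ)) + rq - (κλ/(2Δz))·max((q₊₁)₊², q₋²) + (κλ/(2Δz))·max(q₊², (q₋₁)₋²) is nondecreasing in q and satisfies χ(q) → ±∞ as q → ±∞, where r, κ, λ, Δz > 0 and q₊₁, q₋₁, μ, φ are fixed reals; hence for any G ∈ ℝ the equation χ(q) = G has at least one solution, and exactly one solution since χ is strictly increasing. -/
/-- The function
`χ(q) = r(μ/λ - φ/(κλ)) + rq - (κλ/(2Δz)) max((q₊₁)₊², q₋²) + (κλ/(2Δz)) max(q₊², (q₋₁)₋²)`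
is strictly increasing, tends to `-∞` at `-∞` and `+∞` at `+∞`, and is a bijection of `ℝ`;
in particular `χ(q) = G` has a unique solution for every `G`. -/
theorem stmt_15 (r κ lam Δz μ φ qp1 qm1 : ℝ)
    (hr : 0 < r) (hκ : 0 < κ) (hlam : 0 < lam) (hΔz : 0 < Δz) :
    StrictMono (fun q : ℝ =>
      r * (μ / lam - φ / (κ * lam)) + r * q
        - κ * lam / (2 * Δz) * max ((max qp1 0) ^ 2) ((min q 0) ^ 2)
        + κ * lam / (2 * Δz) * max ((max q 0) ^ 2) ((min qm1 0) ^ 2)) ∧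
    Filter.Tendsto (fun q : ℝ =>
      r * (μ / lam - φ / (κ * lam)) + r * q
        - κ * lam / (2 * Δz) * max ((max qp1 0) ^ 2) ((min q 0) ^ 2)
        + κ * lam / (2 * Δz) * max ((max q 0) ^ 2) ((min qm1 0) ^ 2))
      Filter.atTop Filter.atTop ∧
    Filter.Tendsto (fun q : ℝ =>
      r * (μ / lam - φ / (κ * lam)) + r * q
        - κ * lam / (2 * Δz) * max ((max qp1 0) ^ 2) ((min q 0) ^ 2)
        + κ * lam / (2 * Δz) * max ((max q 0) ^ 2) ((min qm1 0) ^ 2))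
      Filter.atBot Filter.atBot ∧
    Function.Bijective (fun q : ℝ =>
      r * (μ / lam - φ / (κ * lam)) + r * q
        - κ * lam / (2 * Δz) * max ((max qp1 0) ^ 2) ((min q 0) ^ 2)
        + κ * lam / (2 * Δz) * max ((max q 0) ^ 2) ((min qm1 0) ^ 2)) := by
  set c := κ * lam / (2 * Δz) with hcdef
  have hc : 0 < c := by positivity
  set A := (max qp1 0) ^ 2 with hA
  set B := (min qm1 0) ^ 2 with hB
  have hA0 : 0 ≤ A := sq_nonneg _
  have hB0 : 0 ≤ B := sq_nonneg _
  set K := r * (μ / lam - φ / (κ * lam)) with hK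
  have hmono : StrictMono (fun q : ℝ =>
      K + r * q - c * max A ((min q 0) ^ 2) + c * max ((max q 0) ^ 2) B) := by
    intro a b hab
    have h1 : max A ((min b 0) ^ 2) ≤ max A ((min a 0) ^ 2) := by
      apply max_le_max le_rfl
      have hm : min a 0 ≤ min b 0 := min_le_min hab.le le_rfl
      have hb0 : min b 0 ≤ 0 := min_le_right _ _
      nlinarith
    have h2 : max ((max a 0) ^ 2) B ≤ max ((max b 0) ^ 2) B := by
      apply max_le_max _ le_rfl
      have hm : max a 0 ≤ max b 0 := max_le_max hab.le le_rfl
      have ha0 : 0 ≤ max a 0 := le_max_right _ _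
      nlinarith
    have := mul_le_mul_of_nonneg_left h1 hc.le
    have := mul_le_mul_of_nonneg_left h2 hc.le
    have hrab : r * a < r * b := by nlinarith
    simp only
    linarith
  have htop : Filter.Tendsto (fun q : ℝ =>
      K + r * q - c * max A ((min q 0) ^ 2) + c * max ((max q 0) ^ 2) B)
      Filter.atTop Filter.atTop := by
    have hlin : Filter.Tendsto (fun q : ℝ => (K - c * A) + r * q)
        Filter.atTop Filter.atTop :=
      Filter.tendsto_atTop_add_const_left _ _
        (Filter.Tendsto.const_mul_atTop hr Filter.tendsto_id)
    apply Filter.tendsto_atTop_mono' _ ?_ hlin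
    filter_upwards [Filter.eventually_ge_atTop (0 : ℝ)] with q hq
    have h1 : min q 0 = 0 := min_eq_right hq
    have h2 : max A ((min q 0) ^ 2) = A := by
      rw [h1]; simpa using max_eq_left hA0
    have h3 : 0 ≤ c * max ((max q 0) ^ 2) B := by
      apply mul_nonneg hc.le
      exact le_trans hB0 (le_max_right _ _)
    rw [h2]; linarith
  have hbot : Filter.Tendsto (fun q : ℝ =>
      K + r * q - c * max A ((min q 0) ^ 2) + c * max ((max q 0) ^ 2) B)
      Filter.atBot Filter.atBot := by
    have hlin : Filter.Tendsto (fun q : ℝ => (K + c * B) + r * q)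
        Filter.atBot Filter.atBot :=
      Filter.tendsto_atBot_add_const_left _ _
        (Filter.Tendsto.const_mul_atBot hr Filter.tendsto_id)
    apply Filter.tendsto_atBot_mono' _ ?_ hlin
    filter_upwards [Filter.eventually_le_atBot (0 : ℝ)] with q hq
    have h1 : max q 0 = 0 := max_eq_right hq
    have h2 : max ((max q 0) ^ 2) B = B := by
      rw [h1]; simpa using max_eq_right hB0
    have h3 : 0 ≤ c * max A ((min q 0) ^ 2) := by
      apply mul_nonneg hc.le
      exact le_trans hA0 (le_max_left _ _)
    rw [h2]; linarith
  have hcont : Continuous (fun q : ℝ =>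
      K + r * q - c * max A ((min q 0) ^ 2) + c * max ((max q 0) ^ 2) B) := by
    exact ((continuous_const.add (continuous_const.mul continuous_id)).sub
        (continuous_const.mul
          (continuous_const.max ((continuous_id.min continuous_const).pow 2)))).add
      (continuous_const.mul
        (((continuous_id.max continuous_const).pow 2).max continuous_const))
  exact ⟨hmono, htop, hbot, hmono.injective, hcont.surjective htop hbot⟩
end
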